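/- arXiv:1208.4516 — 2 statements merged into one kernel-verified Lean document; each statement's English description precedes it below -/
import Mathlib

section
/- Let c₂ ≥ 2 be a real constant and l ≥ 1 an integer. Let S₁, …, S_f be pairwise disjoint finite sets of reals and for each i let G_i consist of the min(|S_i|, ⌈c₂ l⌉) largest elements of S_i. Then for any set of indices I ⊆ {1,…,f} and any integer k with 1 ≤ k ≤ l: if x is an element whose rank in ⋃_{i∈I} G_i is at least k, then the rank of x in ⋃_{i∈I} S_i is at least k; and the k-th largest element of ⋃_{i∈I} S_i (when it exists) belongs to ⋃_{i∈I} G_i. -/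
/-!
Passing from the `S i` to the subsets `G i` can only lower ranks, which gives the first claim.
For the second, an element `x ∈ S i \ G i` lies below all of `G i`, and `G i` is then a proper
subset of `S i`, hence has exactly `⌈c₂ l⌉` elements; so `x` has rank greater than
`⌈c₂ l⌉ ≥ l ≥ k` in `⋃ S i`.
-/

namespace Finset

variable {α : Type*} [Preorder α] [DecidableLE α]

lemma card_lt_card_filter_le {G T : Finset α} {x : α} (hGT : G ⊆ T)
    (hxT : x ∈ T) (hxG : x ∉ G) (hGx : ∀ y ∈ G, x < y) :
    #G < #(T.filter (x ≤ ·)) := by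
  classical
  have hinsert : insert x G ⊆ T.filter (x ≤ ·) := by
    intro y hy
    rcases mem_insert.1 hy with rfl | hy
    · exact mem_filter.2 ⟨hxT, le_rfl⟩
    · exact mem_filter.2 ⟨hGT hy, (hGx y hy).le⟩
  simpa [card_insert_of_notMem hxG] using card_le_card hinsert

lemma mem_of_card_filter_le_le {S G T : Finset α} {m : ℕ} (hGS : G ⊆ S)
    (hGcard : #G = min #S m) (hGtop : ∀ x ∈ S, x ∉ G → ∀ y ∈ G, x < y) (hST : S ⊆ T)
    {x : α} (hxS : x ∈ S) (hrank : #(T.filter (x ≤ ·)) ≤ m) : x ∈ G := by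
  by_contra hxG
  have hG_lt : #G < #S := card_lt_card ((ssubset_iff_of_subset hGS).2 ⟨x, hxS, hxG⟩)
  have hGm : #G = m := by omega
  have := card_lt_card_filter_le (hGS.trans hST) (hST hxS) hxG (hGtop x hxS hxG)
  omega

end Finset

lemma Nat.le_ceil_mul_of_one_le {c : ℝ} (hc : 1 ≤ c) (l : ℕ) : l ≤ ⌈c * l⌉₊ := by
  have : (l : ℝ) ≤ c * l := le_mul_of_one_le_left l.cast_nonneg hc
  exact_mod_cast this.trans (Nat.le_ceil _)

theorem stmt_12_general (c₂ : ℝ) (hc₂ : 2 ≤ c₂) (f l k : ℕ)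
    (hkl : k ≤ l)
    (S G : Fin f → Finset ℝ)
    (hGS : ∀ i, G i ⊆ S i)
    (hGcard : ∀ i, (G i).card = min (S i).card ⌈c₂ * l⌉₊)
    (hGtop : ∀ i, ∀ x ∈ S i, x ∉ G i → ∀ y ∈ G i, x < y)
    (I : Finset (Fin f)) :
    (∀ x : ℝ, k ≤ ((I.biUnion G).filter (fun y => x ≤ y)).card →
        k ≤ ((I.biUnion S).filter (fun y => x ≤ y)).card) ∧
    (∀ x ∈ I.biUnion S,
        ((I.biUnion S).filter (fun y => x ≤ y)).card = k → x ∈ I.biUnion G) := by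
  refine ⟨fun x hx => hx.trans ?_, fun x hx hrank => ?_⟩
  · exact Finset.card_le_card <|
      Finset.filter_subset_filter _ (Finset.biUnion_mono fun i _ => hGS i)
  · obtain ⟨i, hi, hxS⟩ := Finset.mem_biUnion.1 hx
    have hkc : k ≤ ⌈c₂ * l⌉₊ := hkl.trans (Nat.le_ceil_mul_of_one_le (by linarith) l)
    have hxG : x ∈ G i := Finset.mem_of_card_filter_le_le (hGS i) (hGcard i) (hGtop i)
      (Finset.subset_biUnion_of_mem S hi) hxS (hrank.trans_le hkc)
    exact Finset.mem_biUnion.2 ⟨i, hi, hxG⟩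

/-- Replacing each child set S_i by its top-⌈c₂l⌉ subset G_i preserves rank-k
queries for k ≤ l. -/
theorem stmt_12 (c₂ : ℝ) (hc₂ : 2 ≤ c₂) (f l k : ℕ) (hl : 1 ≤ l)
    (hk1 : 1 ≤ k) (hkl : k ≤ l)
    (S G : Fin f → Finset ℝ)
    (hdisj : ∀ i j : Fin f, i ≠ j → Disjoint (S i) (S j))
    (hGS : ∀ i, G i ⊆ S i)
    (hGcard : ∀ i, (G i).card = min (S i).card ⌈c₂ * l⌉₊)
    (hGtop : ∀ i, ∀ x ∈ S i, x ∉ G i → ∀ y ∈ G i, x < y)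
    (I : Finset (Fin f)) :
    (∀ x : ℝ, k ≤ ((I.biUnion G).filter (fun y => x ≤ y)).card →
        k ≤ ((I.biUnion S).filter (fun y => x ≤ y)).card) ∧
    (∀ x ∈ I.biUnion S,
        ((I.biUnion S).filter (fun y => x ≤ y)).card = k → x ∈ I.biUnion G) :=
  stmt_12_general c₂ hc₂ f l k hkl S G hGS hGcard hGtop I
end

section
/- Let c ≥ 2 and let L₁, …, L_m be pairwise disjoint finite sets of reals each of size at least c·k for an integer k ≥ 1 with k < m. Let M = {max L₁, …, max L_m}, let v' be the k-th largest element of M, and call L_i active if max L_i ≥ v'. Then there are at least k active sets, and every element of ⋃ L_i that is strictly greater than v' belongs to an active set; consequently the rank of v' in ⋃ L_i is at least k. -/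
/-! The `k` maxima that are at least `v'` are distinct elements of the union lying above `v'`,
and each is the maximum of an active set. -/

namespace Finset

variable {ι α : Type*}

theorem card_filter_image_le_card_filter [DecidableEq α] (f : ι → α) (s : Finset ι)
    (p : α → Prop) [DecidablePred p] :
    ((s.image f).filter p).card ≤ (s.filter (fun i => p (f i))).card := by
  rw [filter_image]
  exact card_image_le

variable [LinearOrder α] {L : ι → Finset α} (hne : ∀ i, (L i).Nonempty)

theorem image_max'_subset_biUnion (s : Finset ι) :
    s.image (fun i => (L i).max' (hne i)) ⊆ s.biUnion L :=
  image_subset_iff.mpr fun i hi => mem_biUnion.mpr ⟨i, hi, max'_mem _ _⟩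

theorem exists_le_max'_of_mem_biUnion {s : Finset ι} {x v : α} (hx : x ∈ s.biUnion L)
    (hvx : v ≤ x) : ∃ i ∈ s, v ≤ (L i).max' (hne i) ∧ x ∈ L i := by
  obtain ⟨i, hi, hxi⟩ := mem_biUnion.mp hx
  exact ⟨i, hi, hvx.trans (le_max' _ _ hxi), hxi⟩

end Finset

theorem stmt_18_general (m k : ℕ)
    (L : Fin m → Finset ℝ)
    (hne : ∀ i, (L i).Nonempty)
    (v' : ℝ)
    (hv'rank :
      ((Finset.univ.image (fun i => (L i).max' (hne i))).filter
        (fun x => v' ≤ x)).card = k) :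
    k ≤ (Finset.univ.filter (fun i : Fin m => v' ≤ (L i).max' (hne i))).card ∧
    (∀ x ∈ Finset.univ.biUnion L, v' < x →
      ∃ i : Fin m, v' ≤ (L i).max' (hne i) ∧ x ∈ L i) ∧
    k ≤ ((Finset.univ.biUnion L).filter (fun x => v' ≤ x)).card := by
  subst hv'rank
  refine ⟨Finset.card_filter_image_le_card_filter _ _ _, fun x hx hvx => ?_, ?_⟩
  · obtain ⟨i, -, hi⟩ := Finset.exists_le_max'_of_mem_biUnion hne hx hvx.le
    exact ⟨i, hi⟩
  · exact Finset.card_le_card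
      (Finset.filter_subset_filter _ (Finset.image_max'_subset_biUnion hne _))

/-- Reduction for the case k < m of AURS: take the k-th largest maximum v'; then at
least k sets are active, every element of the union strictly above v' lies in an
active set, and the rank of v' in the union is at least k. -/
theorem stmt_18 (c : ℝ) (hc : 2 ≤ c) (m k : ℕ) (hk : 1 ≤ k) (hkm : k < m)
    (L : Fin m → Finset ℝ)
    (hne : ∀ i, (L i).Nonempty)
    (hdisj : ∀ i j : Fin m, i ≠ j → Disjoint (L i) (L j))
    (hsize : ∀ i, c * k ≤ ((L i).card : ℝ))
    (v' : ℝ)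
    (hv'M : v' ∈ Finset.univ.image (fun i => (L i).max' (hne i)))
    (hv'rank :
      ((Finset.univ.image (fun i => (L i).max' (hne i))).filter
        (fun x => v' ≤ x)).card = k) :
    k ≤ (Finset.univ.filter (fun i : Fin m => v' ≤ (L i).max' (hne i))).card ∧
    (∀ x ∈ Finset.univ.biUnion L, v' < x →
      ∃ i : Fin m, v' ≤ (L i).max' (hne i) ∧ x ∈ L i) ∧
    k ≤ ((Finset.univ.biUnion L).filter (fun x => v' ≤ x)).card :=
  stmt_18_general m k L hne v' hv'rank
end
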